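/- arXiv:2106.10668 — 2 statements merged into one kernel-verified Lean document; each statement's English description precedes it below -/
import Mathlib

section
/- Let x₁ < x₂ < ... < xₙ be real numbers and a₁, ..., aₙ ≥ 0. Then Σ_{i=1}^{n-1} (aᵢ + aᵢ₊₁)²/(xᵢ₊₁ - xᵢ) ≥ (Σ_{i=1}^n aᵢ)²/(xₙ - x₁). -/
theorem stmt_5 (n : ℕ) (hn : 1 ≤ n) (x a : ℕ → ℝ)
    (hx : ∀ i, i + 1 < n → x i < x (i + 1))
    (ha : ∀ i, i < n → 0 ≤ a i) :
    (∑ i ∈ Finset.range (n - 1), (a i + a (i + 1))^2 / (x (i + 1) - x i))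
      ≥ (∑ i ∈ Finset.range n, a i)^2 / (x (n - 1) - x 0) := by
  rcases Nat.lt_or_ge n 2 with h2 | h2
  · interval_cases n
    simp
  obtain ⟨m, rfl⟩ : ∃ m, n = m + 1 := ⟨n - 1, by omega⟩
  have hm : 1 ≤ m := by omega
  simp only [Nat.add_sub_cancel]
  have hgpos : ∀ i ∈ Finset.range m, (0:ℝ) < x (i + 1) - x i := by
    intro i hi
    simp only [Finset.mem_range] at hi
    have := hx i (by omega)
    linarith
  have hsumg : ∑ i ∈ Finset.range m, (x (i + 1) - x i) = x m - x 0 :=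
    Finset.sum_range_sub x m
  have key := Finset.sq_sum_div_le_sum_sq_div (Finset.range m)
    (fun i => a i + a (i + 1)) hgpos
  rw [hsumg] at key
  refine le_trans ?_ key
  have hden : (0:ℝ) < x m - x 0 := by
    rw [← hsumg]
    exact Finset.sum_pos hgpos (by simp; omega)
  have hsa : ∑ i ∈ Finset.range (m + 1), a i ≤ ∑ i ∈ Finset.range m, (a i + a (i + 1)) := by
    rw [Finset.sum_range_succ, Finset.sum_add_distrib]
    have h1 : a m ≤ ∑ i ∈ Finset.range m, a (i + 1) := by
      have := Finset.single_le_sum (f := fun i => a (i + 1))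
        (fun i hi => ha (i + 1) (by simp at hi; omega)) (Finset.self_mem_range_succ (m - 1) |> fun _ => (Finset.mem_range.mpr (by omega) : m - 1 ∈ Finset.range m))
      simpa [Nat.sub_add_cancel hm] using this
    linarith
  have hsan : 0 ≤ ∑ i ∈ Finset.range (m + 1), a i :=
    Finset.sum_nonneg fun i hi => ha i (Finset.mem_range.mp hi)
  gcongr
end

section
/- For every h ∈ H¹₀((-1,1)) with h ≠ 0, it holds that 4 ∫_{-1}^{1} |h'(x)|² dx + 2 / (∫_{-1}^{1} h(x)² dx)^{1/2} ≥ 3 π^{2/3}, and equality holds for h(x) = π^{-2/3} cos(πx/2). -/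
/-!
The Poincaré inequality `(π/2)² ∫ h² ≤ ∫ h'²` comes from the positive Dirichlet eigenfunction
`cos (π x / 2)` of `(-1, 1)`: on `[-s, s]` with `s < 1`, expanding `0 ≤ ∫ (h' + (π/2) h tan (π x / 2))²`
and recognising the cross terms as the derivative of `h² tan (π x / 2)` leaves only boundary terms,
which vanish as `s → 1` because `h(±s)² = O((1 - s)²)` while `tan (π s / 2) = O((1 - s)⁻¹)`.
The energy is then at least `π² t² + 2 / t` with `t = ‖h‖₂`, and `π² t² + 2 / t ≥ 3 π^{2/3}` is
AM-GM, with equality at `t = π^{-2/3}`, the norm of `π^{-2/3} cos (π x / 2)`.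
-/

open Real MeasureTheory Filter Topology Set

lemma IntervalIntegrable.of_sq {f : ℝ → ℝ} {a b : ℝ} (hf : AEStronglyMeasurable f volume)
    (hsq : IntervalIntegrable (fun x => f x ^ 2) volume a b) :
    IntervalIntegrable f volume a b := by
  rw [intervalIntegrable_iff] at *
  have : IsFiniteMeasure (volume.restrict (uIoc a b)) :=
    isFiniteMeasure_restrict.2 (by simp [uIoc])
  exact ((memLp_two_iff_integrable_sq hf.restrict).2 hsq).integrable one_le_two

lemma hasDerivAt_sq_mul_tan {h : ℝ → ℝ} {h' k x : ℝ} (hh : HasDerivAt h h' x)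
    (hc : cos (k * x) ≠ 0) :
    HasDerivAt (fun x => h x ^ 2 * tan (k * x))
      (2 * h x * h' * tan (k * x) + h x ^ 2 * (k / cos (k * x) ^ 2)) x := by
  have htan : HasDerivAt (fun x => tan (k * x)) (1 / cos (k * x) ^ 2 * k) x :=
    (hasDerivAt_tan hc).comp x (by simpa using (hasDerivAt_id x).const_mul k)
  exact ((hh.fun_pow 2).mul htan).congr_deriv (by push_cast; ring)

lemma sq_add_mul_tan_eq {d y k x : ℝ} (hc : cos (k * x) ≠ 0) :
    (d + k * y * tan (k * x)) ^ 2
      = d ^ 2 - k ^ 2 * y ^ 2 + k * (2 * y * d * tan (k * x) + y ^ 2 * (k / cos (k * x) ^ 2)) := by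
  have hsec : 1 / cos (k * x) ^ 2 = 1 + tan (k * x) ^ 2 := by
    rw [one_div, ← inv_one_add_tan_sq hc, inv_inv]
  rw [div_eq_mul_one_div k, hsec]
  ring

lemma sq_mul_integral_sq_le_add_tan {h : ℝ → ℝ} {k a b : ℝ} (hab : a ≤ b)
    (hcos : ∀ x ∈ Icc a b, cos (k * x) ≠ 0) (hd : Differentiable ℝ h)
    (hi : IntervalIntegrable (fun x => deriv h x ^ 2) volume a b) :
    k ^ 2 * ∫ x in a..b, h x ^ 2 ≤
      (∫ x in a..b, deriv h x ^ 2) + k * (h b ^ 2 * tan (k * b) - h a ^ 2 * tan (k * a)) := by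
  rw [← uIcc_of_le hab] at hcos
  set G' := fun x => 2 * h x * deriv h x * tan (k * x) + h x ^ 2 * (k / cos (k * x) ^ 2)
  have htan : ContinuousOn (fun x => tan (k * x)) (uIcc a b) :=
    continuousOn_tan.comp (by fun_prop) hcos
  have hG' : IntervalIntegrable G' volume a b := by
    refine IntervalIntegrable.add ?_ (ContinuousOn.intervalIntegrable ?_)
    · refine ((hi.of_sq (measurable_deriv h).aestronglyMeasurable).continuousOn_mul
        (g := fun x => 2 * h x * tan (k * x)) ?_).congr fun x _ => by ring
      exact (continuous_const.mul hd.continuous).continuousOn.mul htan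
    · exact (hd.continuous.pow 2).continuousOn.mul
        (continuousOn_const.div (by fun_prop) fun x hx => pow_ne_zero 2 (hcos x hx))
  have hFTC : ∫ x in a..b, G' x = h b ^ 2 * tan (k * b) - h a ^ 2 * tan (k * a) :=
    intervalIntegral.integral_eq_sub_of_hasDerivAt
      (fun x hx => hasDerivAt_sq_mul_tan (hd x).hasDerivAt (hcos x hx)) hG'
  have hsq : IntervalIntegrable (fun x => h x ^ 2) volume a b :=
    (hd.continuous.pow 2).intervalIntegrable a b
  have hexpand : ∫ x in a..b, (deriv h x + k * h x * tan (k * x)) ^ 2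
      = (∫ x in a..b, deriv h x ^ 2) - k ^ 2 * (∫ x in a..b, h x ^ 2) + k * ∫ x in a..b, G' x := by
    rw [← intervalIntegral.integral_const_mul, ← intervalIntegral.integral_const_mul,
      ← intervalIntegral.integral_sub hi (hsq.const_mul _),
      ← intervalIntegral.integral_add (hi.sub (hsq.const_mul _)) (hG'.const_mul _)]
    exact intervalIntegral.integral_congr fun x hx => sq_add_mul_tan_eq (hcos x hx)
  have hnonneg : 0 ≤ ∫ x in a..b, (deriv h x + k * h x * tan (k * x)) ^ 2 :=
    intervalIntegral.integral_nonneg hab fun x _ => sq_nonneg _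
  rw [hexpand, hFTC] at hnonneg
  linarith

lemma tendsto_sq_div_sub_of_eq_zero {f : ℝ → ℝ} {x : ℝ} (hf : DifferentiableAt ℝ f x)
    (h0 : f x = 0) : Tendsto (fun y => f y ^ 2 / (x - y)) (𝓝[≠] x) (𝓝 0) := by
  have hslope : Tendsto (slope f x) (𝓝[≠] x) (𝓝 (deriv f x)) :=
    hasDerivAt_iff_tendsto_slope.1 hf.hasDerivAt
  have hsub : Tendsto (fun y => x - y) (𝓝[≠] x) (𝓝 0) := by
    have : Tendsto (fun y => x - y) (𝓝 x) (𝓝 (x - x)) := tendsto_const_nhds.sub tendsto_id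
    exact (sub_self x ▸ this).mono_left nhdsWithin_le_nhds
  convert (hslope.pow 2).mul hsub using 1
  · funext y
    rw [slope_def_field, h0, sub_zero]
    rcases eq_or_ne y x with rfl | hy
    · simp
    · have : x - y ≠ 0 := sub_ne_zero.2 hy.symm
      field_simp
      ring
  · simp

lemma tan_pi_div_two_mul_le {a : ℝ} (ha0 : 0 ≤ a) (ha1 : a < 1) :
    tan (π / 2 * a) ≤ 1 / (1 - a) := by
  have hcos : 1 - a ≤ cos (π / 2 * a) := by
    have := one_sub_mul_le_cos (x := π / 2 * a) (by positivity) (by nlinarith [pi_pos])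
    rwa [show 2 / π * (π / 2 * a) = a by field_simp] at this
  rw [tan_eq_sin_div_cos]
  exact div_le_div₀ zero_le_one (sin_le_one _) (by linarith) hcos

lemma tendsto_sq_mul_tan_nhdsLT_one {f : ℝ → ℝ} (hf : DifferentiableAt ℝ f 1) (h1 : f 1 = 0) :
    Tendsto (fun a => f a ^ 2 * tan (π / 2 * a)) (𝓝[<] 1) (𝓝 0) := by
  have hmem : ∀ᶠ a in 𝓝[<] (1 : ℝ), a ∈ Ioo 0 1 :=
    Ioo_mem_nhdsLT (by norm_num)
  refine tendsto_of_tendsto_of_tendsto_of_le_of_le' tendsto_const_nhds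
    ((tendsto_sq_div_sub_of_eq_zero hf h1).mono_left (nhdsLT_le_nhdsNE 1)) ?_ ?_
  · filter_upwards [hmem] with a ha
    have := tan_nonneg_of_nonneg_of_le_pi_div_two (x := π / 2 * a) (by nlinarith [pi_pos, ha.1])
      (by nlinarith [pi_pos, ha.2])
    positivity
  · filter_upwards [hmem] with a ha
    calc f a ^ 2 * tan (π / 2 * a) ≤ f a ^ 2 * (1 / (1 - a)) :=
          mul_le_mul_of_nonneg_left (tan_pi_div_two_mul_le ha.1.le ha.2) (sq_nonneg _)
      _ = f a ^ 2 / (1 - a) := by ring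

lemma pi_div_two_sq_mul_integral_sq_le {h : ℝ → ℝ} (hd : Differentiable ℝ h)
    (hm1 : h (-1) = 0) (hp1 : h 1 = 0)
    (hi : IntervalIntegrable (fun x => deriv h x ^ 2) volume (-1) 1) :
    (π / 2) ^ 2 * ∫ x in (-1 : ℝ)..1, h x ^ 2 ≤ ∫ x in (-1 : ℝ)..1, deriv h x ^ 2 := by
  have hsq : ∀ a b, IntervalIntegrable (fun x => h x ^ 2) volume a b :=
    fun a b => (hd.continuous.pow 2).intervalIntegrable a b
  have hleft : Tendsto (fun s => (π / 2) ^ 2 * ∫ x in -s..s, h x ^ 2) (𝓝[<] 1)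
      (𝓝 ((π / 2) ^ 2 * ∫ x in (-1 : ℝ)..1, h x ^ 2)) := by
    have hP := intervalIntegral.continuous_primitive hsq 0
    have hsym : Continuous fun s : ℝ => ∫ x in -s..s, h x ^ 2 :=
      (hP.sub (hP.comp continuous_neg)).congr fun s =>
        intervalIntegral.integral_interval_sub_left (hsq 0 s) (hsq 0 (-s))
    exact ((continuous_const.mul hsym).tendsto 1).mono_left nhdsWithin_le_nhds
  have hright : Tendsto (fun s => (∫ x in (-1 : ℝ)..1, deriv h x ^ 2)
      + π / 2 * (h s ^ 2 * tan (π / 2 * s) + h (-s) ^ 2 * tan (π / 2 * s))) (𝓝[<] 1)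
      (𝓝 ((∫ x in (-1 : ℝ)..1, deriv h x ^ 2) + π / 2 * (0 + 0))) :=
    tendsto_const_nhds.add (((tendsto_sq_mul_tan_nhdsLT_one (hd 1) hp1).add
      (tendsto_sq_mul_tan_nhdsLT_one (f := fun x => h (-x)) (by fun_prop)
        (by simpa using hm1))).const_mul _)
  rw [add_zero, mul_zero, add_zero] at hright
  refine le_of_tendsto_of_tendsto hleft hright ?_
  filter_upwards [Ioo_mem_nhdsLT (show (0 : ℝ) < 1 by norm_num)] with s hs
  have hsub : uIcc (-s) s ⊆ uIcc (-1) 1 := by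
    rw [uIcc_of_le (by linarith [hs.1]), uIcc_of_le (by norm_num)]
    exact Icc_subset_Icc (by linarith [hs.2]) hs.2.le
  have hcos : ∀ x ∈ Icc (-s) s, cos (π / 2 * x) ≠ 0 := fun x hx =>
    (cos_pos_of_mem_Ioo ⟨by nlinarith [pi_pos, hx.1, hs.2], by nlinarith [pi_pos, hx.2, hs.2]⟩).ne'
  have hpicone := sq_mul_integral_sq_le_add_tan (by linarith [hs.1]) hcos hd (hi.mono_set hsub)
  have hmono : ∫ x in -s..s, deriv h x ^ 2 ≤ ∫ x in (-1 : ℝ)..1, deriv h x ^ 2 :=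
    intervalIntegral.integral_mono_interval (by linarith [hs.2]) (by linarith [hs.1]) hs.2.le
      (ae_of_all _ fun x => sq_nonneg _) hi
  rw [mul_neg, tan_neg] at hpicone
  linarith

lemma three_mul_le_cube_mul_sq_add_two_div {b t : ℝ} (hb : 0 < b) (ht : 0 < t) :
    3 * b ≤ b ^ 3 * t ^ 2 + 2 / t := by
  rw [← sub_nonneg]
  have : b ^ 3 * t ^ 2 + 2 / t - 3 * b = (b * t - 1) ^ 2 * (b * t + 2) / t := by
    field_simp; ring
  rw [this]; positivity

lemma integral_comp_pi_mul_div_two (f : ℝ → ℝ) :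
    ∫ x in (-1 : ℝ)..1, f (π * x / 2) = 2 / π * ∫ x in -(π / 2)..π / 2, f x := by
  have := intervalIntegral.integral_comp_mul_left f (a := -1) (b := 1) (c := π / 2) (by positivity)
  simp only [mul_neg, mul_one, smul_eq_mul, inv_div] at this
  simpa only [mul_div_right_comm] using this

lemma integral_cos_pi_mul_div_two_sq : ∫ x in (-1 : ℝ)..1, cos (π * x / 2) ^ 2 = 1 := by
  rw [integral_comp_pi_mul_div_two (fun x => cos x ^ 2), integral_cos_sq, cos_neg, sin_neg, cos_pi_div_two]
  field_simp
  ring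

lemma integral_sin_pi_mul_div_two_sq : ∫ x in (-1 : ℝ)..1, sin (π * x / 2) ^ 2 = 1 := by
  rw [integral_comp_pi_mul_div_two (fun x => sin x ^ 2), integral_sin_sq, cos_neg, sin_neg, cos_pi_div_two]
  field_simp
  ring

theorem stmt_18 :
    (∀ h : ℝ → ℝ, Differentiable ℝ h → h (-1) = 0 → h 1 = 0 →
      IntervalIntegrable (fun x => (deriv h x)^2) volume (-1) 1 →
      0 < (∫ x in (-1:ℝ)..1, (h x)^2) →
      3 * π ^ ((2:ℝ)/3) ≤
        4 * (∫ x in (-1:ℝ)..1, (deriv h x)^2)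
          + 2 / (∫ x in (-1:ℝ)..1, (h x)^2) ^ ((1:ℝ)/2)) ∧
    4 * (∫ x in (-1:ℝ)..1, (deriv (fun x => π ^ (-(2:ℝ)/3) * Real.cos (π * x / 2)) x)^2)
        + 2 / (∫ x in (-1:ℝ)..1, ((π:ℝ) ^ (-(2:ℝ)/3) * Real.cos (π * x / 2))^2) ^ ((1:ℝ)/2)
      = 3 * π ^ ((2:ℝ)/3) := by
  set b : ℝ := π ^ ((2 : ℝ) / 3)
  have hb : 0 < b := by positivity
  have hb3 : b ^ 3 = π ^ 2 := by
    rw [← rpow_natCast, ← rpow_mul pi_pos.le, ← rpow_natCast]; norm_num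
  refine ⟨fun h hd hm1 hp1 hi hpos => ?_, ?_⟩
  · have hpoincare := pi_div_two_sq_mul_integral_sq_le hd hm1 hp1 hi
    calc 3 * b ≤ b ^ 3 * ((∫ x in (-1:ℝ)..1, h x ^ 2) ^ ((1 : ℝ) / 2)) ^ 2
          + 2 / (∫ x in (-1:ℝ)..1, h x ^ 2) ^ ((1 : ℝ) / 2) :=
          three_mul_le_cube_mul_sq_add_two_div hb (by positivity)
      _ ≤ _ := by rw [hb3, ← sqrt_eq_rpow, sq_sqrt hpos.le]; linarith
  · have hc : π ^ (-(2 : ℝ) / 3) = b⁻¹ := by rw [neg_div, rpow_neg pi_pos.le]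
    have hderiv : deriv (fun x => π ^ (-(2:ℝ)/3) * cos (π * x / 2))
        = fun x => -(b⁻¹ * (π / 2)) * sin (π * x / 2) := by
      funext x
      rw [hc]
      exact ((((hasDerivAt_id x).const_mul π).div_const 2).cos.const_mul b⁻¹).deriv.trans
        (by simp only [id_eq, mul_one]; ring)
    rw [hderiv]
    simp only [hc, mul_pow, intervalIntegral.integral_const_mul,
      integral_sin_pi_mul_div_two_sq, integral_cos_pi_mul_div_two_sq, mul_one]
    rw [← sqrt_eq_rpow, sqrt_sq (by positivity)]
    field_simp
    linear_combination (-4) * hb3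
end
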